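/- arXiv:1609.03053 — 2 statements merged into one kernel-verified Lean document; each statement's English description precedes it below -/
import Mathlib

section
/- For the 1d2v system, the quantity C(X, d) = ḡ^T Λ⁰(X)^T Mq 𝟙 + ḡ^T G^T M1 d is conserved along solutions of the semi-discrete equations Ẋ = V₁ and M1 ḋ = -Λ¹(X)^T Mq V₁, for any fixed vector ḡ ∈ R^{N0}, assuming the compatibility relation Λ¹(x) G = d/dx Λ⁰(x) holds for each particle position (i.e., the gradient of the degree-p spline evaluated at x equals the sum over the discrete-gradient matrix of degree-(p-1) splines at x). -/
/-!
Differentiating the deposited charge `Λ⁰(X)ᵀ Mq 𝟙` along `Ẋ = V₁` gives, by the chain rule and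
the compatibility relation `d/dx Λ⁰ = Gᵀ Λ¹`, the vector `Gᵀ Λ¹(X)ᵀ Mq V₁ = Gᵀ J`, while Ampère's
law gives `d/dt (Gᵀ M1 d) = -Gᵀ J`. Hence the whole vector `Λ⁰(X)ᵀ Mq 𝟙 + Gᵀ M1 d` (a discrete
Gauss law) is constant in time, and so is each of its components `ḡ ⬝ᵥ ·`.
-/

open Matrix

variable {ι κ μ : Type*} [Fintype ι]

/-- `Λ(x)ᵀ w`: the weights `w a` of particles at positions `x a` deposited on the basis `Λ`. -/
def deposit (Λ : ℝ → κ → ℝ) (x w : ι → ℝ) : κ → ℝ :=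
  fun j => ∑ a, Λ (x a) j * w a

theorem mulVec_deposit [Fintype κ] (A : Matrix μ κ ℝ) (Λ : ℝ → κ → ℝ) (x w : ι → ℝ) :
    deposit (fun y => A *ᵥ Λ y) x w = A *ᵥ deposit Λ x w := by
  ext i
  simp only [deposit, mulVec, dotProduct, Finset.sum_mul, Finset.mul_sum]
  rw [Finset.sum_comm]
  simp_rw [mul_assoc]

theorem hasDerivAt_deposit {Λ Λ' : ℝ → κ → ℝ} (hΛ : ∀ x, HasDerivAt Λ (Λ' x) x)
    (q : ι → ℝ) {X V : ℝ → ι → ℝ} {t : ℝ} (hX : ∀ a, HasDerivAt (fun s => X s a) (V t a) t) :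
    HasDerivAt (fun s => deposit Λ (X s) q) (deposit Λ' (X t) (q * V t)) t := by
  refine hasDerivAt_pi.2 fun j => HasDerivAt.fun_sum fun a _ => ?_
  refine (((hasDerivAt_pi.1 (hΛ (X t a)) j).comp t (hX a)).mul_const (q a)).congr_deriv ?_
  rw [Pi.mul_apply]
  ring

theorem HasDerivAt.matrix_mulVec (A : Matrix κ ι ℝ) {f : ℝ → ι → ℝ} {f' : ι → ℝ}
    {t : ℝ} (hf : HasDerivAt f f' t) : HasDerivAt (fun s => A *ᵥ f s) (A *ᵥ f') t :=
  hasDerivAt_pi.2 fun i =>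
    HasDerivAt.fun_sum fun j _ => (hasDerivAt_pi.1 hf j).const_mul (A i j)

theorem add_mulVec_mulVec_eq_of_continuity [Fintype κ] (D : Matrix κ ι ℝ) (M : Matrix ι ι ℝ)
    {ρ : ℝ → κ → ℝ} {J d d' : ℝ → ι → ℝ} (hρ : ∀ t, HasDerivAt ρ (D *ᵥ J t) t)
    (hd : ∀ t, HasDerivAt d (d' t) t) (hAmpere : ∀ t, M *ᵥ d' t = -J t) (t s : ℝ) :
    ρ t + D *ᵥ (M *ᵥ d t) = ρ s + D *ᵥ (M *ᵥ d s) := by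
  have hderiv : ∀ t, HasDerivAt (fun t => ρ t + D *ᵥ (M *ᵥ d t)) 0 t := fun t => by
    refine ((hρ t).add (((hd t).matrix_mulVec M).matrix_mulVec D)).congr_deriv ?_
    rw [hAmpere, mulVec_neg, add_neg_cancel]
  exact is_const_of_deriv_eq_zero (fun t => (hderiv t).differentiableAt)
    (fun t => (hderiv t).deriv) t s

theorem discrete_casimir_conserved_1d2v_general
    {Np N0 N1 : ℕ}
    (G : Matrix (Fin N1) (Fin N0) ℝ)
    (M1 : Matrix (Fin N1) (Fin N1) ℝ)
    (q : Fin Np → ℝ)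
    (Λ0 : ℝ → Fin N0 → ℝ) (Λ1 : ℝ → Fin N1 → ℝ)
    (hcompat : ∀ (x : ℝ) (j : Fin N0),
      HasDerivAt (fun y => Λ0 y j) (∑ i, G i j * Λ1 x i) x)
    (gbar : Fin N0 → ℝ)
    (X V1 : ℝ → Fin Np → ℝ) (d d' : ℝ → Fin N1 → ℝ)
    (hX : ∀ t a, HasDerivAt (fun s => X s a) (V1 t a) t)
    (hd : ∀ t, HasDerivAt d (d' t) t)
    (hAmpere : ∀ t, M1.mulVec (d' t)
      = fun i => -∑ a, Λ1 (X t a) i * q a * V1 t a) :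
    ∀ t, (gbar ⬝ᵥ fun j => ∑ a, Λ0 (X t a) j * q a)
          + gbar ⬝ᵥ Gᵀ.mulVec (M1.mulVec (d t))
        = (gbar ⬝ᵥ fun j => ∑ a, Λ0 (X 0 a) j * q a)
          + gbar ⬝ᵥ Gᵀ.mulVec (M1.mulVec (d 0)) := by
  set J : ℝ → Fin N1 → ℝ := fun t => deposit Λ1 (X t) (q * V1 t)
  have hΛ0 : ∀ x, HasDerivAt Λ0 (Gᵀ *ᵥ Λ1 x) x := fun x => hasDerivAt_pi.2 (hcompat x)
  have hcharge : ∀ t, HasDerivAt (fun s => deposit Λ0 (X s) q) (Gᵀ *ᵥ J t) t := fun t => by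
    rw [← mulVec_deposit]
    exact hasDerivAt_deposit hΛ0 q (hX t)
  have hcurrent : ∀ t, M1 *ᵥ d' t = -J t := fun t => by
    ext i
    simp only [hAmpere, J, deposit, Pi.neg_apply, Pi.mul_apply, mul_assoc]
  intro t
  rw [← dotProduct_add, ← dotProduct_add]
  exact congrArg (gbar ⬝ᵥ ·) (add_mulVec_mulVec_eq_of_continuity Gᵀ M1 hcharge hd hcurrent t 0)

/-- Conservation of the discrete Gauss-law Casimir in the 1d2v system:
`C(X,d) = ḡᵀ Λ⁰(X)ᵀ Mq 𝟙 + ḡᵀ Gᵀ M1 d` is conserved along solutions of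
`Ẋ = V₁`, `M1 ḋ = -Λ¹(X)ᵀ Mq V₁`, assuming the compatibility relation
`∑ i, G i j Λ¹ᵢ(x) = d/dx Λ⁰ⱼ(x)`. -/
theorem discrete_casimir_conserved_1d2v
    {Np N0 N1 : ℕ}
    (G : Matrix (Fin N1) (Fin N0) ℝ)
    (M1 : Matrix (Fin N1) (Fin N1) ℝ) (hM1sym : M1ᵀ = M1) (hM1inv : IsUnit M1)
    (q : Fin Np → ℝ)
    (Λ0 : ℝ → Fin N0 → ℝ) (Λ1 : ℝ → Fin N1 → ℝ)
    (hcompat : ∀ (x : ℝ) (j : Fin N0),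
      HasDerivAt (fun y => Λ0 y j) (∑ i, G i j * Λ1 x i) x)
    (gbar : Fin N0 → ℝ)
    (X V1 : ℝ → Fin Np → ℝ) (d d' : ℝ → Fin N1 → ℝ)
    (hX : ∀ t a, HasDerivAt (fun s => X s a) (V1 t a) t)
    (hd : ∀ t, HasDerivAt d (d' t) t)
    (hAmpere : ∀ t, M1.mulVec (d' t)
      = fun i => -∑ a, Λ1 (X t a) i * q a * V1 t a) :
    ∀ t, (gbar ⬝ᵥ fun j => ∑ a, Λ0 (X t a) j * q a)
          + gbar ⬝ᵥ Gᵀ.mulVec (M1.mulVec (d t))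
        = (gbar ⬝ᵥ fun j => ∑ a, Λ0 (X 0 a) j * q a)
          + gbar ⬝ᵥ Gᵀ.mulVec (M1.mulVec (d 0)) :=
  discrete_casimir_conserved_1d2v_general G M1 q Λ0 Λ1 hcompat gbar X V1 d d' hX hd hAmpere
end

section
/- For the semi-discrete Vlasov–Maxwell ODE system Ẋ = V, Mp V̇ = Mq(Λ(X) e + B(X,b) V), M₁ ė = C^T M₂ b - Λ(X)^T Mq V, ḃ = -C e, the discrete energy H = ½ V^T Mp V + ½ e^T M₁ e + ½ b^T M₂ b is conserved (dH/dt = 0), provided B(X,b) is antisymmetric for every (X,b) and Mp, Mq are diagonal (hence Mq B is antisymmetric whenever B is, after appropriate symmetric weighting: specifically V^T Mq B(X,b) V = 0). -/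
open Matrix

section Derivatives

variable {m n : Type*} [Fintype n] {t : ℝ}

theorem HasDerivAt.dotProduct {f g : ℝ → n → ℝ} {f' g' : n → ℝ}
    (hf : HasDerivAt f f' t) (hg : HasDerivAt g g' t) :
    HasDerivAt (fun s => f s ⬝ᵥ g s) (f' ⬝ᵥ g t + f t ⬝ᵥ g') t := by
  simpa only [_root_.dotProduct, ← Finset.sum_add_distrib] using
    HasDerivAt.fun_sum fun i _ => (hasDerivAt_pi.mp hf i).fun_mul (hasDerivAt_pi.mp hg i)

theorem HasDerivAt.mulVec (M : Matrix m n ℝ) {g : ℝ → n → ℝ} {g' : n → ℝ}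
    (hg : HasDerivAt g g' t) : HasDerivAt (fun s => M *ᵥ g s) (M *ᵥ g') t :=
  hasDerivAt_pi.mpr fun i => by
    simpa only [Matrix.mulVec, _root_.dotProduct] using
      HasDerivAt.fun_sum fun j _ => (hasDerivAt_pi.mp hg j).const_mul (M i j)

end Derivatives

namespace Matrix.IsSymm

variable {n : Type*} [Fintype n] {M : Matrix n n ℝ}

theorem mulVec_dotProduct (hM : M.IsSymm) (x y : n → ℝ) : M *ᵥ x ⬝ᵥ y = x ⬝ᵥ M *ᵥ y := by
  rw [dotProduct_comm, ← dotProduct_transpose_mulVec, hM.eq]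

theorem hasDerivAt_half_dotProduct_mulVec (hM : M.IsSymm) {f : ℝ → n → ℝ} {f' : n → ℝ}
    {t : ℝ} (hf : HasDerivAt f f' t) :
    HasDerivAt (fun s => 1 / 2 * (f s ⬝ᵥ M *ᵥ f s)) (f t ⬝ᵥ M *ᵥ f') t := by
  refine ((hf.dotProduct (hf.mulVec M)).const_mul (1 / 2 : ℝ)).congr_deriv ?_
  rw [dotProduct_comm f', hM.mulVec_dotProduct]
  ring

end Matrix.IsSymm

theorem discrete_energy_conserved_general
    {n n1 n2 : ℕ}
    (mp mq : Fin n → ℝ)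
    (M1 : Matrix (Fin n1) (Fin n1) ℝ) (hM1 : M1.PosDef)
    (M2 : Matrix (Fin n2) (Fin n2) ℝ) (hM2 : M2.PosDef)
    (Λ : (Fin n → ℝ) → Matrix (Fin n) (Fin n1) ℝ)
    (B : (Fin n → ℝ) → (Fin n2 → ℝ) → Matrix (Fin n) (Fin n) ℝ)
    (hBweighted : ∀ X b (v : Fin n → ℝ),
      v ⬝ᵥ (Matrix.diagonal mq).mulVec ((B X b).mulVec v) = 0)
    (C : Matrix (Fin n2) (Fin n1) ℝ)
    (X V V' : ℝ → Fin n → ℝ) (e e' : ℝ → Fin n1 → ℝ) (b : ℝ → Fin n2 → ℝ)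
    (hV : ∀ t, HasDerivAt V (V' t) t)
    (hVeq : ∀ t, (Matrix.diagonal mp).mulVec (V' t)
      = (Matrix.diagonal mq).mulVec
          ((Λ (X t)).mulVec (e t) + (B (X t) (b t)).mulVec (V t)))
    (he : ∀ t, HasDerivAt e (e' t) t)
    (heeq : ∀ t, M1.mulVec (e' t)
      = Cᵀ.mulVec (M2.mulVec (b t))
        - (Λ (X t))ᵀ.mulVec ((Matrix.diagonal mq).mulVec (V t)))
    (hb : ∀ t, HasDerivAt b (-(C.mulVec (e t))) t) :
    ∀ t, HasDerivAt (fun s =>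
        (1 / 2) * (V s ⬝ᵥ (Matrix.diagonal mp).mulVec (V s))
        + (1 / 2) * (e s ⬝ᵥ M1.mulVec (e s))
        + (1 / 2) * (b s ⬝ᵥ M2.mulVec (b s))) 0 t := by
  intro t
  have hM1 : M1.IsSymm := isHermitian_iff_isSymm.mp hM1.isHermitian
  have hM2 : M2.IsSymm := isHermitian_iff_isSymm.mp hM2.isHermitian
  have hMq : (diagonal mq).IsSymm := isSymm_diagonal mq
  refine ((((isSymm_diagonal mp).hasDerivAt_half_dotProduct_mulVec (hV t)).add
    (hM1.hasDerivAt_half_dotProduct_mulVec (he t))).add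
    (hM2.hasDerivAt_half_dotProduct_mulVec (hb t))).congr_deriv ?_
  -- The Lorentz force does no work, and the coupling terms cancel in pairs.
  rw [hVeq, heeq, mulVec_add, dotProduct_add, hBweighted, add_zero, dotProduct_sub,
    dotProduct_transpose_mulVec, dotProduct_transpose_mulVec, hMq.mulVec_dotProduct,
    hM2.mulVec_dotProduct, mulVec_neg, dotProduct_neg]
  ring

/-- Energy conservation for the semi-discrete Vlasov–Maxwell system:
along solutions of `Ẋ = V`, `Mp V̇ = Mq(Λ(X) e + B(X,b) V)`,
`M₁ ė = Cᵀ M₂ b - Λ(X)ᵀ Mq V`, `ḃ = -C e`, the discrete energy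
`H = ½ Vᵀ Mp V + ½ eᵀ M₁ e + ½ bᵀ M₂ b` is conserved. -/
theorem discrete_energy_conserved
    {n n1 n2 : ℕ}
    (mp mq : Fin n → ℝ) (hmp : ∀ i, 0 < mp i)
    (M1 : Matrix (Fin n1) (Fin n1) ℝ) (hM1 : M1.PosDef)
    (M2 : Matrix (Fin n2) (Fin n2) ℝ) (hM2 : M2.PosDef)
    (Λ : (Fin n → ℝ) → Matrix (Fin n) (Fin n1) ℝ)
    (B : (Fin n → ℝ) → (Fin n2 → ℝ) → Matrix (Fin n) (Fin n) ℝ)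
    (hBanti : ∀ X b, (B X b)ᵀ = -(B X b))
    (hBweighted : ∀ X b (v : Fin n → ℝ),
      v ⬝ᵥ (Matrix.diagonal mq).mulVec ((B X b).mulVec v) = 0)
    (C : Matrix (Fin n2) (Fin n1) ℝ)
    (X V V' : ℝ → Fin n → ℝ) (e e' : ℝ → Fin n1 → ℝ) (b : ℝ → Fin n2 → ℝ)
    (hX : ∀ t, HasDerivAt X (V t) t)
    (hV : ∀ t, HasDerivAt V (V' t) t)
    (hVeq : ∀ t, (Matrix.diagonal mp).mulVec (V' t)
      = (Matrix.diagonal mq).mulVec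
          ((Λ (X t)).mulVec (e t) + (B (X t) (b t)).mulVec (V t)))
    (he : ∀ t, HasDerivAt e (e' t) t)
    (heeq : ∀ t, M1.mulVec (e' t)
      = Cᵀ.mulVec (M2.mulVec (b t))
        - (Λ (X t))ᵀ.mulVec ((Matrix.diagonal mq).mulVec (V t)))
    (hb : ∀ t, HasDerivAt b (-(C.mulVec (e t))) t) :
    ∀ t, HasDerivAt (fun s =>
        (1 / 2) * (V s ⬝ᵥ (Matrix.diagonal mp).mulVec (V s))
        + (1 / 2) * (e s ⬝ᵥ M1.mulVec (e s))
        + (1 / 2) * (b s ⬝ᵥ M2.mulVec (b s))) 0 t :=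
  discrete_energy_conserved_general mp mq M1 hM1 M2 hM2 Λ B hBweighted C X V V' e e' b hV hVeq he
    heeq hb
end
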